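/- arXiv:2105.12290 — 3 statements merged into one kernel-verified Lean document; each statement's English description precedes it below -/
import Mathlib

section
/- Let Ξ be a symmetric n×n random matrix with zeros on the diagonal and independent N(0, σ_{uv}²) entries above the diagonal, where all σ_{uv}² ≤ σ_max². Fix a partition of the index set {1,…,n} into K classes, and let Ξ^{(k,l)} for k, l = 1,…,K denote the corresponding K² submatrices of Ξ. Then there exist absolute constants C₁, C₂, C₃ such that for every t > 0, with probability at least 1 − e^{−t}, the sum over all k, l = 1,…,K of the squared operator norms ‖Ξ^{(k,l)}‖_op² is at most σ_max² (C₁ n K + C₂ K² log n + C₃ t). -/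
open MeasureTheory ProbabilityTheory

/-- The spectral (operator) norm of a real matrix, i.e. its largest singular value:
the operator norm of the induced linear map between Euclidean spaces. -/
noncomputable def opNormM {m n : Type} [Fintype m] [Fintype n] [DecidableEq n]
    (M : Matrix m n ℝ) : ℝ :=
  ‖LinearMap.toContinuousLinearMap (Matrix.toEuclideanLin M)‖

/-!
Let `v ∈ ℝ^{K²}` be the vector of block norms `‖Ξ^{(k,l)}‖`. Take `1/4`-nets of the unit
spheres of `ℝ^{K²}` and of each class space `ℝ^{n_k}`. A net point `λ` nearly attains `‖v‖`
as `∑ |λ_{kl}| ‖Ξ^{(k,l)}‖`, and each block norm is nearly attained by a pair of net points,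
so `(3/8) ‖v‖` is at most the maximum of a finite family of linear forms `∑ W_{uw} Ξ_{uw}` whose
weight matrices have Frobenius norm at most `1`. By symmetry of `Ξ` each form is a weighted sum
of the independent upper-triangular Gaussian entries, hence sub-Gaussian with variance proxy
`2 σ_max²`. The family has at most `9^{K²} (2^K 9^n)^{2K}` members, so a union bound costs
`O(nK + K²)` in the exponent.
-/

open Metric Module
open scoped NNReal ENNReal RealInnerProductSpace

section SphereNets

variable {E : Type*} [NormedAddCommGroup E] [NormedSpace ℝ E] [FiniteDimensional ℝ E]
  [MeasurableSpace E] [BorelSpace E]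

theorem card_le_of_isSeparated_of_subset_sphere {ε : ℝ≥0} (hε : 0 < ε) {s : Finset E}
    (hs : (s : Set E) ⊆ sphere 0 1) (hsep : IsSeparated ε (s : Set E)) :
    (s.card : ℝ) ≤ (1 + 2 / ε) ^ finrank ℝ E := by
  rcases subsingleton_or_nontrivial E with hE | hE
  · have : s = ∅ := by
      simpa [sphere_eq_empty_of_subsingleton one_ne_zero, Set.subset_empty_iff] using hs
    simp only [this, Finset.card_empty, Nat.cast_zero]
    positivity
  set μ : Measure E := Measure.addHaar
  set r : ℝ := ε / 2 with hr_def
  have hr : 0 < r := by positivity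
  have hdisj : (s : Set E).PairwiseDisjoint (closedBall · r) := fun x hx y hy hxy ↦
    closedBall_disjoint_closedBall <| lt_of_not_ge fun h ↦
      (hsep hx hy hxy).not_ge (edist_le_coe.2 (dist_le_coe.1 (by linarith)))
  have hunion : (⋃ x ∈ s, closedBall x r) ⊆ closedBall 0 (1 + r) := by
    simp only [Set.iUnion_subset_iff]
    intro x hx y hy
    rw [mem_closedBall] at hy ⊢
    linarith [dist_triangle y x 0, mem_sphere.1 (hs hx)]
  have hB : 0 < μ.real (ball 0 1) :=
    ENNReal.toReal_pos (measure_ball_pos μ _ one_pos).ne' measure_ball_lt_top.ne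
  have hvol : (s.card : ℝ) * r ^ finrank ℝ E * μ.real (ball 0 1)
      ≤ (1 + r) ^ finrank ℝ E * μ.real (ball 0 1) :=
    calc (s.card : ℝ) * r ^ finrank ℝ E * μ.real (ball 0 1)
        = μ.real (⋃ x ∈ s, closedBall x r) := by
          rw [measureReal_biUnion_finset hdisj (fun _ _ ↦ measurableSet_closedBall)
            (fun _ _ ↦ measure_closedBall_lt_top.ne)]
          simp [Measure.addHaar_real_closedBall μ _ hr.le, mul_assoc]
      _ ≤ μ.real (closedBall 0 (1 + r)) := measureReal_mono hunion measure_closedBall_lt_top.ne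
      _ = (1 + r) ^ finrank ℝ E * μ.real (ball 0 1) :=
          Measure.addHaar_real_closedBall μ _ (by positivity)
  calc (s.card : ℝ) = s.card * r ^ finrank ℝ E / r ^ finrank ℝ E := by field_simp
    _ ≤ (1 + r) ^ finrank ℝ E / r ^ finrank ℝ E := by
        gcongr; exact le_of_mul_le_mul_right hvol hB
    _ = (1 + 2 / ε) ^ finrank ℝ E := by rw [← div_pow]; congr 1; field_simp; ring


theorem exists_finset_isCover_sphere {ε : ℝ≥0} (hε : 0 < ε) :
    ∃ N : Finset E, (N : Set E) ⊆ sphere 0 1 ∧ IsCover ε (sphere 0 1) (N : Set E) ∧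
      (N.card : ℝ) ≤ (1 + 2 / ε) ^ finrank ℝ E := by
  set S : Set E := sphere 0 1
  obtain ⟨C, -, hCfin, hC⟩ :=
    exists_finite_isCover_of_isCompact (ε := ε / 2) (by positivity) (isCompact_sphere (0 : E) 1)
  have htop : packingNumber ε S ≠ ⊤ := by
    refine ne_top_of_le_ne_top (Set.encard_ne_top_iff.2 hCfin) ?_
    calc packingNumber ε S = packingNumber (2 * (ε / 2)) S := by
          rw [mul_div_cancel₀ _ two_ne_zero]
      _ ≤ externalCoveringNumber (ε / 2) S := packingNumber_two_mul_le_externalCoveringNumber _ _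
      _ ≤ C.encard := hC.externalCoveringNumber_le_encard
  have hfin : (maximalSeparatedSet ε S).Finite :=
    Set.encard_ne_top_iff.1 (by rwa [encard_maximalSeparatedSet htop])
  have hsub : ((hfin.toFinset : Finset E) : Set E) ⊆ S := by
    simpa using maximalSeparatedSet_subset
  refine ⟨hfin.toFinset, hsub, by simpa using isCover_maximalSeparatedSet htop, ?_⟩
  exact card_le_of_isSeparated_of_subset_sphere hε hsub
    (by simpa using isSeparated_maximalSeparatedSet)

end SphereNets

theorem Metric.IsCover.exists_norm_sub_le {E : Type*} [SeminormedAddCommGroup E] {ε : ℝ≥0}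
    {s N : Set E} (h : IsCover ε s N) {x : E} (hx : x ∈ s) : ∃ y ∈ N, ‖x - y‖ ≤ ε := by
  obtain ⟨y, hy, hxy⟩ := h hx
  exact ⟨y, hy, by rw [← dist_eq_norm]; exact dist_le_coe.2 (edist_le_coe.1 hxy)⟩

section OperatorNorm

variable {E F : Type*} [NormedAddCommGroup E] [InnerProductSpace ℝ E]
  [NormedAddCommGroup F] [InnerProductSpace ℝ F] {ε : ℝ≥0}

theorem exists_mem_inner_ge_of_isCover {N : Set E} (hN : IsCover ε (sphere 0 1) N) {v : E}
    (hv : v ≠ 0) : ∃ y ∈ N, (1 - ε) * ‖v‖ ≤ ⟪y, v⟫ := by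
  have hu : ‖‖v‖⁻¹ • v‖ = 1 := by simpa using norm_smul_inv_norm (𝕜 := ℝ) hv
  obtain ⟨y, hy, hxy⟩ := hN.exists_norm_sub_le (mem_sphere_zero_iff_norm.2 hu)
  refine ⟨y, hy, ?_⟩
  have hx : ⟪‖v‖⁻¹ • v, v⟫ = ‖v‖ := by
    rw [real_inner_smul_left, real_inner_self_eq_norm_sq]
    field_simp [norm_ne_zero_iff.2 hv]
  have hdiff : ⟪‖v‖⁻¹ • v - y, v⟫ ≤ ε * ‖v‖ :=
    (real_inner_le_norm _ _).trans (by gcongr)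
  rw [inner_sub_left, hx] at hdiff
  linarith

theorem opNorm_le_of_isCover {NE : Set E} {NF : Set F} (hE : IsCover ε (sphere 0 1) NE)
    (hNF : NF ⊆ sphere 0 1) (hF : IsCover ε (sphere 0 1) NF) (f : E →L[ℝ] F) {s : ℝ}
    (hs : 0 ≤ s) (h : ∀ x ∈ NE, ∀ y ∈ NF, ⟪f x, y⟫ ≤ s) : (1 - 2 * ε) * ‖f‖ ≤ s := by
  suffices ∀ x, ‖x‖ = 1 → ‖f x‖ ≤ s + 2 * ε * ‖f‖ by
    linarith [f.opNorm_le_of_unit_norm (by positivity) this]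
  intro x hx
  rcases eq_or_ne (f x) 0 with h0 | h0
  · rw [h0, norm_zero]; positivity
  set y := ‖f x‖⁻¹ • f x
  obtain ⟨x₀, hx₀, hxx₀⟩ := hE.exists_norm_sub_le (mem_sphere_zero_iff_norm.2 hx)
  have hu : ‖y‖ = 1 := by simpa using norm_smul_inv_norm (𝕜 := ℝ) h0
  obtain ⟨y₀, hy₀, hyy₀⟩ := hF.exists_norm_sub_le (mem_sphere_zero_iff_norm.2 hu)
  have hy₀1 : ‖y₀‖ = 1 := mem_sphere_zero_iff_norm.1 (hNF hy₀)
  have hy : ⟪f x, y⟫ = ‖f x‖ := by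
    rw [real_inner_smul_right, real_inner_self_eq_norm_sq]
    field_simp [norm_ne_zero_iff.2 h0]
  have hsplit : ⟪f x, y⟫ = ⟪f x₀, y₀⟫ + ⟪f (x - x₀), y₀⟫ + ⟪f x, y - y₀⟫ := by
    simp only [map_sub, inner_sub_left, inner_sub_right]; ring
  have h1 : ⟪f (x - x₀), y₀⟫ ≤ ε * ‖f‖ := calc
    _ ≤ ‖f (x - x₀)‖ * ‖y₀‖ := real_inner_le_norm _ _
    _ ≤ ‖f‖ * ‖x - x₀‖ := by rw [hy₀1, mul_one]; exact f.le_opNorm _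
    _ ≤ ε * ‖f‖ := by rw [mul_comm]; gcongr
  have h2 : ⟪f x, y - y₀⟫ ≤ ε * ‖f‖ := calc
    _ ≤ ‖f x‖ * ‖y - y₀‖ := real_inner_le_norm _ _
    _ ≤ ‖f‖ * ε := by gcongr; simpa [hx] using f.le_opNorm x
    _ = ε * ‖f‖ := mul_comm _ _
  linarith [h x₀ hx₀ y₀ hy₀]

end OperatorNorm

section BlockTests

variable {κ : Type*} [Fintype κ] {E F : κ → Type*} [∀ q, Zero (E q)] [∀ q, Zero (F q)]
  {Λ : Finset (EuclideanSpace ℝ κ)} {NE : ∀ q, Finset (E q)} {NF : ∀ q, Finset (F q)}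

open Classical in
/-- Zero is allowed as a test vector so that the per-block maximum is nonnegative, also for
empty classes, whose unit spheres are empty. -/
noncomputable def blockTests (Λ : Finset (EuclideanSpace ℝ κ)) (NE : ∀ q, Finset (E q))
    (NF : ∀ q, Finset (F q)) : Finset (EuclideanSpace ℝ κ × ∀ q, E q × F q) :=
  Λ ×ˢ Fintype.piFinset fun q ↦ insert 0 (NE q) ×ˢ insert 0 (NF q)

theorem mem_blockTests {j : EuclideanSpace ℝ κ × ∀ q, E q × F q} :
    j ∈ blockTests Λ NE NF ↔ j.1 ∈ Λ ∧
      ∀ q, ((j.2 q).1 = 0 ∨ (j.2 q).1 ∈ NE q) ∧ ((j.2 q).2 = 0 ∨ (j.2 q).2 ∈ NF q) := by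
  classical
  simp [blockTests]

theorem card_blockTests_le :
    (blockTests Λ NE NF).card ≤ Λ.card * ∏ q, ((NE q).card + 1) * ((NF q).card + 1) := by
  classical
  rw [blockTests, Finset.card_product, Fintype.card_piFinset]
  gcongr with q
  rw [Finset.card_product]
  gcongr <;> exact Finset.card_insert_le _ _

end BlockTests

section BlockForm

variable {κ : Type*} [Fintype κ] {E F : κ → Type*}
  [∀ q, NormedAddCommGroup (E q)] [∀ q, NormedAddCommGroup (F q)]
  {Λ : Finset (EuclideanSpace ℝ κ)} {NE : ∀ q, Finset (E q)} {NF : ∀ q, Finset (F q)}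

theorem norm_le_one_of_mem_blockTests (hΛ : (Λ : Set (EuclideanSpace ℝ κ)) ⊆ sphere 0 1)
    (hNE : ∀ q, (NE q : Set (E q)) ⊆ sphere 0 1) (hNF : ∀ q, (NF q : Set (F q)) ⊆ sphere 0 1)
    {j : EuclideanSpace ℝ κ × ∀ q, E q × F q} (hj : j ∈ blockTests Λ NE NF) :
    ‖j.1‖ ≤ 1 ∧ ∀ q, ‖(j.2 q).1‖ ≤ 1 ∧ ‖(j.2 q).2‖ ≤ 1 := by
  obtain ⟨h1, h2⟩ := mem_blockTests.1 hj
  refine ⟨(mem_sphere_zero_iff_norm.1 (hΛ h1)).le, fun q ↦ ⟨?_, ?_⟩⟩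
  · rcases (h2 q).1 with h | h
    · simp [h]
    · exact (mem_sphere_zero_iff_norm.1 (hNE q h)).le
  · rcases (h2 q).2 with h | h
    · simp [h]
    · exact (mem_sphere_zero_iff_norm.1 (hNF q h)).le

variable [∀ q, InnerProductSpace ℝ (E q)] [∀ q, InnerProductSpace ℝ (F q)]

def blockForm (f : ∀ q, E q →L[ℝ] F q) (j : EuclideanSpace ℝ κ × ∀ q, E q × F q) : ℝ :=
  ∑ q, |j.1 q| * ⟪f q (j.2 q).1, (j.2 q).2⟫

theorem sum_opNorm_sq_le_of_blockForm_le {ε : ℝ≥0} (hε : ε ≤ 1 / 2)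
    (hΛ : IsCover ε (sphere 0 1) (Λ : Set (EuclideanSpace ℝ κ)))
    (hE : ∀ q, IsCover ε (sphere 0 1) (NE q : Set (E q)))
    (hNF : ∀ q, (NF q : Set (F q)) ⊆ sphere 0 1)
    (hF : ∀ q, IsCover ε (sphere 0 1) (NF q : Set (F q)))
    (f : ∀ q, E q →L[ℝ] F q) {s : ℝ} (h : ∀ j ∈ blockTests Λ NE NF, blockForm f j ≤ s) :
    ((1 - ε) * (1 - 2 * ε)) ^ 2 * ∑ q, ‖f q‖ ^ 2 ≤ s ^ 2 := by
  classical
  set v : EuclideanSpace ℝ κ := WithLp.toLp 2 fun q ↦ ‖f q‖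
  have hv : ∑ q, ‖f q‖ ^ 2 = ‖v‖ ^ 2 := by simp [v, EuclideanSpace.real_norm_sq_eq]
  rcases eq_or_ne v 0 with hv0 | hv0
  · simpa [hv, hv0] using sq_nonneg s
  obtain ⟨l, hl, hlv⟩ := exists_mem_inner_ge_of_isCover hΛ hv0
  have hmax : ∀ q, ∃ xy ∈ insert 0 (NE q) ×ˢ insert 0 (NF q),
      ∀ xy' ∈ insert 0 (NE q) ×ˢ insert 0 (NF q), ⟪f q xy'.1, xy'.2⟫ ≤ ⟪f q xy.1, xy.2⟫ :=
    fun q ↦ Finset.exists_max_image _ _ ⟨(0, 0), by simp⟩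
  choose χ hχ hχmax using hmax
  have hblock : ∀ q, (1 - 2 * ε) * ‖f q‖ ≤ ⟪f q (χ q).1, (χ q).2⟫ := fun q ↦
    opNorm_le_of_isCover (hE q) (hNF q) (hF q) (f q) (by simpa using hχmax q (0, 0) (by simp))
      fun x hx y hy ↦ hχmax q (x, y) (Finset.mem_product.2
        ⟨Finset.mem_insert_of_mem hx, Finset.mem_insert_of_mem hy⟩)
  have hj : (l, χ) ∈ blockTests Λ NE NF := by
    refine mem_blockTests.2 ⟨hl, fun q ↦ ?_⟩
    simpa using hχ q
  have h2ε : 0 ≤ 1 - 2 * (ε : ℝ) := by linarith [show (ε : ℝ) ≤ 1 / 2 from hε]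
  have hlin : (1 - ε) * (1 - 2 * ε) * ‖v‖ ≤ s := calc
    (1 - ε) * (1 - 2 * ε) * ‖v‖ = (1 - 2 * ε) * ((1 - ε) * ‖v‖) := by ring
    _ ≤ (1 - 2 * ε) * ⟪l, v⟫ := by gcongr
    _ ≤ (1 - 2 * ε) * ∑ q, |l q| * ‖f q‖ := by
        gcongr
        simp only [v, PiLp.inner_apply, RCLike.inner_apply, conj_trivial]
        refine Finset.sum_le_sum fun q _ ↦ ?_
        rw [mul_comm]
        exact mul_le_mul_of_nonneg_right (le_abs_self _) (norm_nonneg _)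
    _ = ∑ q, |l q| * ((1 - 2 * ε) * ‖f q‖) := by
        rw [Finset.mul_sum]; exact Fintype.sum_congr _ _ fun q ↦ by ring
    _ ≤ blockForm f (l, χ) := by unfold blockForm; gcongr with q; exact hblock q
    _ ≤ s := h _ hj
  rw [hv, ← mul_pow]
  have h1ε : 0 ≤ 1 - (ε : ℝ) := by linarith
  exact pow_le_pow_left₀ (by positivity) hlin 2

end BlockForm

section UpperTriangle

variable {ι M : Type*} [Fintype ι] [LinearOrder ι] [AddCommMonoid M]

theorem sum_sum_eq_sum_lt_add_swap_add_sum_diag (g : ι → ι → M) :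
    ∑ u, ∑ w, g u w =
      ∑ p : {p : ι × ι // p.1 < p.2}, (g p.1.1 p.1.2 + g p.1.2 p.1.1) + ∑ u, g u u := by
  have hlt (f : ι → ι → M) :
      ∑ u, ∑ w, (if u < w then f u w else 0) = ∑ p : {p : ι × ι // p.1 < p.2}, f p.1.1 p.1.2 := by
    rw [← Fintype.sum_prod_type' (f := fun u w ↦ if u < w then f u w else 0),
      Finset.sum_ite, Finset.sum_const_zero, add_zero, ← Finset.sum_subtype_eq_sum_filter,
      Finset.subtype_univ]
  calc ∑ u, ∑ w, g u w
      = ∑ u, ∑ w, ((if u < w then g u w else 0) + (if w < u then g u w else 0) +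
          (if u = w then g u w else 0)) := by
        refine Fintype.sum_congr _ _ fun u ↦ Fintype.sum_congr _ _ fun w ↦ ?_
        rcases lt_trichotomy u w with h | rfl | h
        · simp [h, h.not_gt, h.ne]
        · simp
        · simp [h, h.not_gt, h.ne']
    _ = _ := by
        simp only [Finset.sum_add_distrib, hlt g]
        rw [Finset.sum_comm (f := fun u w ↦ if w < u then g u w else 0), hlt fun w u ↦ g u w]
        simp

theorem sum_mul_eq_sum_lt_of_isSymm {R : Type*} [CommSemiring R] {A : Matrix ι ι R}
    (hA : A.IsSymm) (hdiag : ∀ u, A u u = 0) (W : Matrix ι ι R) :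
    ∑ u, ∑ w, W u w * A u w =
      ∑ p : {p : ι × ι // p.1 < p.2}, (W p.1.1 p.1.2 + W p.1.2 p.1.1) * A p.1.1 p.1.2 := by
  rw [sum_sum_eq_sum_lt_add_swap_add_sum_diag]
  simp only [hdiag, mul_zero, Finset.sum_const_zero, add_zero, hA.apply, add_mul]

theorem sum_lt_add_swap_sq_le (W : Matrix ι ι ℝ) :
    ∑ p : {p : ι × ι // p.1 < p.2}, (W p.1.1 p.1.2 + W p.1.2 p.1.1) ^ 2 ≤
      2 * ∑ u, ∑ w, W u w ^ 2 := calc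
  _ ≤ ∑ p : {p : ι × ι // p.1 < p.2}, 2 * (W p.1.1 p.1.2 ^ 2 + W p.1.2 p.1.1 ^ 2) :=
      Finset.sum_le_sum fun p _ ↦ by nlinarith [sq_nonneg (W p.1.1 p.1.2 - W p.1.2 p.1.1)]
  _ ≤ 2 * (∑ p : {p : ι × ι // p.1 < p.2}, (W p.1.1 p.1.2 ^ 2 + W p.1.2 p.1.1 ^ 2) +
        ∑ u, W u u ^ 2) := by
      rw [← Finset.mul_sum]; gcongr; exact le_add_of_nonneg_right (by positivity)
  _ = 2 * ∑ u, ∑ w, W u w ^ 2 := by rw [sum_sum_eq_sum_lt_add_swap_add_sum_diag]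

end UpperTriangle

section Subgaussian

variable {Ω : Type*} [MeasurableSpace Ω] {μ : Measure Ω} {X : Ω → ℝ}

theorem hasSubgaussianMGF_of_map_eq_gaussianReal {v : ℝ≥0} (h : μ.map X = gaussianReal 0 v) :
    HasSubgaussianMGF X v μ := by
  have hX : AEMeasurable X μ := aemeasurable_of_map_neZero (by rw [h]; infer_instance)
  refine (HasSubgaussianMGF.id_map_iff hX).1 ?_
  rw [h]
  exact ⟨fun t ↦ integrable_exp_mul_gaussianReal t, fun t ↦ by simp [mgf_id_gaussianReal]⟩

theorem ProbabilityTheory.HasSubgaussianMGF.mono {c c' : ℝ≥0} (h : HasSubgaussianMGF X c μ)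
    (hc : c ≤ c') : HasSubgaussianMGF X c' μ :=
  ⟨h.integrable_exp_mul, fun t ↦ (h.mgf_le t).trans (Real.exp_le_exp.2 (by gcongr))⟩

theorem ProbabilityTheory.HasSubgaussianMGF.measure_sqrt_lt_le [IsFiniteMeasure μ] {c : ℝ≥0}
    (h : HasSubgaussianMGF X c μ) {τ : ℝ} (hτ : 0 ≤ τ) :
    μ {ω | √(2 * c * τ) < X ω} ≤ ENNReal.ofReal (Real.exp (-τ)) := by
  rcases eq_or_ne c 0 with rfl | hc
  · refine (measure_mono_null (fun ω hω ↦ ?_)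
      (ae_iff.1 h.ae_eq_zero_of_hasSubgaussianMGF_zero)).trans_le zero_le
    simp only [NNReal.coe_zero, mul_zero, zero_mul, Real.sqrt_zero, Set.mem_ofPred_eq] at hω ⊢
    exact hω.ne'
  calc μ {ω | √(2 * c * τ) < X ω} ≤ μ {ω | √(2 * c * τ) ≤ X ω} :=
        measure_mono (Set.ofPred_subset_ofPred.2 fun _ ↦ le_of_lt)
    _ = ENNReal.ofReal (μ.real {ω | √(2 * c * τ) ≤ X ω}) := (ofReal_measureReal).symm
    _ ≤ ENNReal.ofReal (Real.exp (-√(2 * c * τ) ^ 2 / (2 * c))) :=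
        ENNReal.ofReal_le_ofReal (h.measure_ge_le (Real.sqrt_nonneg _))
    _ = ENNReal.ofReal (Real.exp (-τ)) := by
        rw [Real.sq_sqrt (by positivity)]
        field_simp

end Subgaussian

section RandomSymmetricMatrix

variable {Ω ι : Type*} [MeasurableSpace Ω] {μ : Measure Ω} [Fintype ι] [LinearOrder ι]

theorem hasSubgaussianMGF_sum_mul_entry {Ξ : Ω → Matrix ι ι ℝ} {var : ι → ι → ℝ≥0}
    {σ2 : ℝ≥0} (hsym : ∀ ω, (Ξ ω).IsSymm) (hdiag : ∀ ω u, Ξ ω u u = 0)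
    (hmap : ∀ u w, u < w → μ.map (fun ω ↦ Ξ ω u w) = gaussianReal 0 (var u w))
    (hind : iIndepFun (fun (p : {p : ι × ι // p.1 < p.2}) ω ↦ Ξ ω p.1.1 p.1.2) μ)
    (hvar : ∀ u w, var u w ≤ σ2) {W : Matrix ι ι ℝ} (hW : ∑ u, ∑ w, W u w ^ 2 ≤ 1) :
    HasSubgaussianMGF (fun ω ↦ ∑ u, ∑ w, W u w * Ξ ω u w) (2 * σ2) μ := by
  set a : {p : ι × ι // p.1 < p.2} → ℝ := fun p ↦ W p.1.1 p.1.2 + W p.1.2 p.1.1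
  have hsum := HasSubgaussianMGF.sum_of_iIndepFun (s := Finset.univ)
    (hind.comp (fun p x ↦ a p * x) fun p ↦ measurable_const_mul (a p))
    fun p _ ↦ (hasSubgaussianMGF_of_map_eq_gaussianReal (hmap _ _ p.2)).const_mul (a p)
  refine (hsum.congr (ae_of_all _ fun ω ↦ ?_)).mono ?_
  · exact (sum_mul_eq_sum_lt_of_isSymm (hsym ω) (hdiag ω) W).symm
  · rw [← NNReal.coe_le_coe]
    push_cast
    calc ∑ p, a p ^ 2 * (var p.1.1 p.1.2 : ℝ) ≤ ∑ p, a p ^ 2 * σ2 := by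
          gcongr with p; exact hvar _ _
      _ = σ2 * ∑ p, a p ^ 2 := by rw [Finset.mul_sum]; simp only [mul_comm]
      _ ≤ σ2 * (2 * ∑ u, ∑ w, W u w ^ 2) := by gcongr; exact sum_lt_add_swap_sq_le W
      _ ≤ 2 * σ2 := by nlinarith [σ2.coe_nonneg]

end RandomSymmetricMatrix

def netCount (K n : ℕ) : ℕ := 9 ^ (K ^ 2) * (2 ^ K * 9 ^ n) ^ (2 * K)

section MatrixBlocks

variable {ι κ : Type} (c : ι → κ)

abbrev BlockTest : Type :=
  EuclideanSpace ℝ (κ × κ) ×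
    ∀ q : κ × κ, EuclideanSpace ℝ {w // c w = q.2} × EuclideanSpace ℝ {u // c u = q.1}

def testWeight (j : BlockTest c) : Matrix ι ι ℝ := fun u w ↦
  |j.1 (c u, c w)| * (j.2 (c u, c w)).2 ⟨u, rfl⟩ * (j.2 (c u, c w)).1 ⟨w, rfl⟩

theorem testWeight_apply_coe (j : BlockTest c) (q : κ × κ) (u : {u // c u = q.1})
    (w : {w // c w = q.2}) : testWeight c j u w = |j.1 q| * (j.2 q).2 u * (j.2 q).1 w := by
  obtain ⟨k, l⟩ := q
  obtain ⟨u, hu⟩ := u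
  obtain ⟨w, hw⟩ := w
  dsimp only at hu hw
  subst hu hw
  rfl

variable [Fintype ι] [Fintype κ] [DecidableEq κ]

theorem sum_prod_fibers {M : Type*} [AddCommMonoid M] (g : ι → ι → M) :
    ∑ q : κ × κ, ∑ u : {u // c u = q.1}, ∑ w : {w // c w = q.2}, g u w = ∑ u, ∑ w, g u w := by
  rw [Fintype.sum_prod_type]
  calc ∑ k, ∑ l, ∑ u : {u // c u = k}, ∑ w : {w // c w = l}, g u w
      = ∑ k, ∑ u : {u // c u = k}, ∑ w, g u w := Fintype.sum_congr _ _ fun k ↦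
        Finset.sum_comm.trans (Fintype.sum_congr _ _ fun u ↦ Fintype.sum_fiberwise c (g u))
    _ = ∑ u, ∑ w, g u w := Fintype.sum_fiberwise c fun u ↦ ∑ w, g u w

theorem sum_testWeight_sq_le (j : BlockTest c) (h1 : ‖j.1‖ ≤ 1)
    (h2 : ∀ q, ‖(j.2 q).1‖ ≤ 1 ∧ ‖(j.2 q).2‖ ≤ 1) :
    ∑ u, ∑ w, testWeight c j u w ^ 2 ≤ 1 := by
  rw [← sum_prod_fibers c fun u w ↦ testWeight c j u w ^ 2]
  calc ∑ q : κ × κ, ∑ u : {u // c u = q.1}, ∑ w : {w // c w = q.2}, testWeight c j u w ^ 2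
      = ∑ q, j.1 q ^ 2 * (‖(j.2 q).2‖ ^ 2 * ‖(j.2 q).1‖ ^ 2) := by
        refine Fintype.sum_congr _ _ fun q ↦ ?_
        rw [EuclideanSpace.real_norm_sq_eq, EuclideanSpace.real_norm_sq_eq, Finset.sum_mul_sum,
          Finset.mul_sum]
        refine Fintype.sum_congr _ _ fun u ↦ ?_
        rw [Finset.mul_sum]
        refine Fintype.sum_congr _ _ fun w ↦ ?_
        rw [testWeight_apply_coe, mul_pow, mul_pow, sq_abs]
        ring
    _ ≤ ∑ q, j.1 q ^ 2 * (1 * 1) := by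
        gcongr with q
        · exact pow_le_one₀ (norm_nonneg _) (h2 q).2
        · exact pow_le_one₀ (norm_nonneg _) (h2 q).1
    _ = ‖j.1‖ ^ 2 := by simp [EuclideanSpace.real_norm_sq_eq]
    _ ≤ 1 := pow_le_one₀ (norm_nonneg _) h1

theorem card_blockTests_fibers_le {Λ : Finset (EuclideanSpace ℝ (κ × κ))}
    {N : ∀ k, Finset (EuclideanSpace ℝ {u // c u = k})}
    (hΛ : Λ.card ≤ 9 ^ Fintype.card (κ × κ))
    (hN : ∀ k, (N k).card ≤ 9 ^ Fintype.card {u // c u = k}) :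
    (blockTests Λ (fun q ↦ N q.2) (fun q ↦ N q.1)).card ≤
      netCount (Fintype.card κ) (Fintype.card ι) := by
  set f : κ → ℕ := fun k ↦ 2 * 9 ^ Fintype.card {u // c u = k}
  have hf : ∀ k, (N k).card + 1 ≤ f k := fun k ↦ by
    have := Nat.one_le_pow (Fintype.card {u // c u = k}) 9 (by norm_num)
    simp only [f]
    linarith [hN k]
  have hprod : ∏ k, f k = 2 ^ Fintype.card κ * 9 ^ Fintype.card ι := by
    have hcard : ∑ k, Fintype.card {u // c u = k} = Fintype.card ι := by
      simpa using Fintype.sum_fiberwise c fun _ ↦ (1 : ℕ)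
    rw [Finset.prod_mul_distrib, Finset.prod_const, Finset.card_univ, Finset.prod_pow_eq_pow_sum,
      hcard]
  calc (blockTests Λ (fun q ↦ N q.2) (fun q ↦ N q.1)).card
      ≤ Λ.card * ∏ q : κ × κ, ((N q.2).card + 1) * ((N q.1).card + 1) := card_blockTests_le
    _ ≤ 9 ^ (Fintype.card κ ^ 2) * ∏ q : κ × κ, f q.2 * f q.1 := by
        rw [Fintype.card_prod, ← sq] at hΛ
        gcongr with q
        · exact hf q.2
        · exact hf q.1
    _ = 9 ^ (Fintype.card κ ^ 2) * ((∏ k, f k) ^ Fintype.card κ * (∏ k, f k) ^ Fintype.card κ) := by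
        simp only [Finset.prod_mul_distrib, Fintype.prod_prod_type, Finset.prod_const,
          Finset.prod_pow, Finset.card_univ]
    _ = _ := by rw [hprod, netCount]; ring

theorem exists_nets_card_blockTests_le :
    ∃ (Λ : Finset (EuclideanSpace ℝ (κ × κ))) (N : ∀ k, Finset (EuclideanSpace ℝ {u // c u = k})),
      (Λ : Set (EuclideanSpace ℝ (κ × κ))) ⊆ sphere 0 1 ∧
      IsCover (1 / 4) (sphere 0 1) (Λ : Set (EuclideanSpace ℝ (κ × κ))) ∧
      (∀ k, (N k : Set (EuclideanSpace ℝ {u // c u = k})) ⊆ sphere 0 1) ∧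
      (∀ k, IsCover (1 / 4) (sphere 0 1) (N k : Set (EuclideanSpace ℝ {u // c u = k}))) ∧
      (blockTests Λ (fun q ↦ N q.2) (fun q ↦ N q.1)).card ≤
        netCount (Fintype.card κ) (Fintype.card ι) := by
  have h9 : ((1 : ℝ) + 2 / ((1 / 4 : ℝ≥0) : ℝ)) = 9 := by norm_num
  obtain ⟨Λ, hΛsub, hΛ, hΛcard⟩ :=
    exists_finset_isCover_sphere (E := EuclideanSpace ℝ (κ × κ)) (ε := 1 / 4) (by norm_num)
  choose N hNsub hN hNcard using fun k ↦
    exists_finset_isCover_sphere (E := EuclideanSpace ℝ {u // c u = k}) (ε := 1 / 4) (by norm_num)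
  rw [h9, finrank_euclideanSpace] at hΛcard
  simp only [h9, finrank_euclideanSpace] at hNcard
  exact ⟨Λ, N, hΛsub, hΛ, hNsub, hN, card_blockTests_fibers_le c (by exact_mod_cast hΛcard)
    fun k ↦ by exact_mod_cast hNcard k⟩

variable [DecidableEq ι]

noncomputable def blockCLM (A : Matrix ι ι ℝ) (q : κ × κ) :
    EuclideanSpace ℝ {w // c w = q.2} →L[ℝ] EuclideanSpace ℝ {u // c u = q.1} :=
  LinearMap.toContinuousLinearMap (Matrix.toEuclideanLin (A.submatrix (↑) (↑)))

theorem blockForm_blockCLM (A : Matrix ι ι ℝ) (j : BlockTest c) :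
    blockForm (blockCLM c A) j = ∑ u, ∑ w, testWeight c j u w * A u w := by
  rw [← sum_prod_fibers c fun u w ↦ testWeight c j u w * A u w]
  refine Fintype.sum_congr _ _ fun q ↦ ?_
  simp only [blockCLM, LinearMap.coe_toContinuousLinearMap', Matrix.toLpLin_apply,
    PiLp.inner_apply, RCLike.inner_apply, conj_trivial, Matrix.mulVec, dotProduct,
    Matrix.submatrix_apply, testWeight_apply_coe, Finset.mul_sum]
  refine Fintype.sum_congr _ _ fun u ↦ Fintype.sum_congr _ _ fun w ↦ ?_
  ring

theorem sum_opNormM_sq_le_of_forall_blockTests {Λ : Finset (EuclideanSpace ℝ (κ × κ))}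
    {N : ∀ k, Finset (EuclideanSpace ℝ {u // c u = k})}
    (hΛ : IsCover (1 / 4) (sphere 0 1) (Λ : Set (EuclideanSpace ℝ (κ × κ))))
    (hNsub : ∀ k, (N k : Set (EuclideanSpace ℝ {u // c u = k})) ⊆ sphere 0 1)
    (hN : ∀ k, IsCover (1 / 4) (sphere 0 1) (N k : Set (EuclideanSpace ℝ {u // c u = k})))
    (A : Matrix ι ι ℝ) {s : ℝ}
    (h : ∀ j ∈ blockTests Λ (fun q ↦ N q.2) (fun q ↦ N q.1),
      ∑ u, ∑ w, testWeight c j u w * A u w ≤ s) :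
    ∑ k, ∑ l, opNormM (A.submatrix (fun u : {u // c u = k} ↦ (u : ι))
      (fun u : {u // c u = l} ↦ (u : ι))) ^ 2 ≤ 64 / 9 * s ^ 2 := by
  have := sum_opNorm_sq_le_of_blockForm_le (NNReal.coe_le_coe.1 (by norm_num)) hΛ (fun q ↦ hN q.2)
    (fun q ↦ hNsub q.1) (fun q ↦ hN q.1) (blockCLM c A)
    fun j hj ↦ (blockForm_blockCLM c A j).trans_le (h j hj)
  rw [Fintype.sum_prod_type] at this
  norm_num at this
  change ∑ k, ∑ l, ‖blockCLM c A (k, l)‖ ^ 2 ≤ 64 / 9 * s ^ 2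
  linarith

theorem sum_opNormM_submatrix_sq_eq_zero [Subsingleton ι] {A : Matrix ι ι ℝ}
    (hdiag : ∀ u, A u u = 0) :
    ∑ k, ∑ l, opNormM (A.submatrix (fun u : {u // c u = k} ↦ (u : ι))
      (fun u : {u // c u = l} ↦ (u : ι))) ^ 2 = 0 := by
  have hA : A = 0 := Matrix.ext fun u w ↦ by rw [Subsingleton.elim u w]; exact hdiag w
  simp [hA, opNormM]

end MatrixBlocks

theorem one_sub_le_measure_of_measure_compl_le {Ω : Type*} [MeasurableSpace Ω] {μ : Measure Ω}
    [IsProbabilityMeasure μ] {s : Set Ω} {p : ℝ≥0∞} (h : μ sᶜ ≤ p) : 1 - p ≤ μ s := by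
  rw [tsub_le_iff_right, ← measure_univ (μ := μ)]
  exact (measure_univ_le_add_compl s).trans (by gcongr)

theorem measure_biUnion_le_of_card_le {α Ω : Type*} [MeasurableSpace Ω] {μ : Measure Ω}
    {J : Finset α} {S : α → Set Ω} {M : ℕ} (hM : 1 ≤ M) (hJ : J.card ≤ M) {τ : ℝ}
    (h : ∀ j ∈ J, μ (S j) ≤ ENNReal.ofReal (Real.exp (-(τ + Real.log M)))) :
    μ (⋃ j ∈ J, S j) ≤ ENNReal.ofReal (Real.exp (-τ)) := by
  have hM0 : (0 : ℝ) < M := by exact_mod_cast hM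
  calc μ (⋃ j ∈ J, S j) ≤ ∑ j ∈ J, μ (S j) := measure_biUnion_finset_le _ _
    _ ≤ ∑ j ∈ J, ENNReal.ofReal (Real.exp (-(τ + Real.log M))) := Finset.sum_le_sum h
    _ = ENNReal.ofReal (J.card * Real.exp (-(τ + Real.log M))) := by
        rw [Finset.sum_const, nsmul_eq_mul, ENNReal.ofReal_mul (by positivity),
          ENNReal.ofReal_natCast]
    _ ≤ ENNReal.ofReal (M * Real.exp (-(τ + Real.log M))) := by gcongr
    _ = ENNReal.ofReal (Real.exp (-τ)) := by
        rw [neg_add, Real.exp_add, Real.exp_neg (Real.log M), Real.exp_log hM0]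
        field_simp

section Concentration

variable {Ω ι κ : Type} [MeasurableSpace Ω] {μ : Measure Ω} [IsProbabilityMeasure μ]
  [Fintype ι] [LinearOrder ι] [Fintype κ] [DecidableEq κ]

theorem measure_lt_sum_opNormM_sq_le {Ξ : Ω → Matrix ι ι ℝ} {var : ι → ι → ℝ≥0} {σ2 : ℝ≥0}
    (hsym : ∀ ω, (Ξ ω).IsSymm) (hdiag : ∀ ω u, Ξ ω u u = 0)
    (hmap : ∀ u w, u < w → μ.map (fun ω ↦ Ξ ω u w) = gaussianReal 0 (var u w))
    (hind : iIndepFun (fun (p : {p : ι × ι // p.1 < p.2}) ω ↦ Ξ ω p.1.1 p.1.2) μ)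
    (hvar : ∀ u w, var u w ≤ σ2) (c : ι → κ) {τ : ℝ} (hτ : 0 ≤ τ) :
    μ {ω | 256 / 9 * σ2 * (τ + Real.log (netCount (Fintype.card κ) (Fintype.card ι))) <
      ∑ k, ∑ l, opNormM ((Ξ ω).submatrix (fun u : {u // c u = k} ↦ (u : ι))
        (fun u : {u // c u = l} ↦ (u : ι))) ^ 2} ≤ ENNReal.ofReal (Real.exp (-τ)) := by
  obtain ⟨Λ, N, hΛsub, hΛ, hNsub, hN, hJ⟩ := exists_nets_card_blockTests_le c
  set J := blockTests Λ (fun q ↦ N q.2) (fun q ↦ N q.1)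
  set M := netCount (Fintype.card κ) (Fintype.card ι)
  have hM1 : 1 ≤ M := Nat.one_le_iff_ne_zero.2 (by simp only [M, netCount]; positivity)
  set L := Real.log M
  have hL : 0 ≤ L := Real.log_nonneg (by exact_mod_cast hM1)
  set s := √(2 * (2 * σ2 : ℝ≥0) * (τ + L))
  have hs : s ^ 2 = 4 * σ2 * (τ + L) := by
    rw [Real.sq_sqrt (by positivity)]; push_cast; ring
  have hbad : {ω | 256 / 9 * σ2 * (τ + L) < ∑ k, ∑ l, opNormM ((Ξ ω).submatrix
        (fun u : {u // c u = k} ↦ (u : ι)) (fun u : {u // c u = l} ↦ (u : ι))) ^ 2} ⊆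
      ⋃ j ∈ J, {ω | s < ∑ u, ∑ w, testWeight c j u w * Ξ ω u w} := by
    intro ω hω
    by_contra hcon
    simp only [Set.mem_iUnion, Set.mem_ofPred_eq, not_exists, not_lt] at hcon hω
    linarith [sum_opNormM_sq_le_of_forall_blockTests c hΛ hNsub hN (Ξ ω) hcon]
  have htail : ∀ j ∈ J, μ {ω | s < ∑ u, ∑ w, testWeight c j u w * Ξ ω u w} ≤
      ENNReal.ofReal (Real.exp (-(τ + L))) := fun j hj ↦ by
    obtain ⟨h1, h2⟩ :=
      norm_le_one_of_mem_blockTests hΛsub (fun q ↦ hNsub q.2) (fun q ↦ hNsub q.1) hj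
    exact (hasSubgaussianMGF_sum_mul_entry hsym hdiag hmap hind hvar
      (sum_testWeight_sq_le c j h1 h2)).measure_sqrt_lt_le (by positivity)
  exact (measure_mono hbad).trans (measure_biUnion_le_of_card_le hM1 hJ htail)

end Concentration

theorem log_netCount_le (K : ℕ) {n : ℕ} (hn : 2 ≤ n) :
    Real.log (netCount K n) ≤ 8 * n * K + 9 * K ^ 2 * Real.log n := by
  have h9 : Real.log 9 ≤ 4 := by
    have := Real.log_le_sub_one_of_pos (show (0 : ℝ) < 3 by norm_num)
    rw [show (9 : ℝ) = 3 ^ 2 by norm_num, Real.log_pow]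
    push_cast
    linarith
  have h36 : Real.log 9 + 2 * Real.log 2 ≤ 9 * Real.log n := by
    have h128 : Real.log 9 ≤ 7 * Real.log 2 := by
      rw [show 7 * Real.log 2 = Real.log (2 ^ 7) by rw [Real.log_pow]; norm_num]
      exact Real.log_le_log (by norm_num) (by norm_num)
    have h2n : Real.log 2 ≤ Real.log n := Real.log_le_log (by norm_num) (by exact_mod_cast hn)
    linarith
  rw [netCount]
  push_cast
  rw [Real.log_mul (by positivity) (by positivity), Real.log_pow, Real.log_pow,
    Real.log_mul (by positivity) (by positivity), Real.log_pow, Real.log_pow]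
  push_cast
  have hnK : (0 : ℝ) ≤ n * K := by positivity
  have hK : (0 : ℝ) ≤ K ^ 2 := by positivity
  nlinarith [mul_le_mul_of_nonneg_left h36 hK, mul_le_mul_of_nonneg_left h9 hnK]

/-- Let `Ξ` be a symmetric `n×n` random matrix with zero diagonal and
independent `N(0, σ_{uw}²)` entries above the diagonal, all `σ_{uw}² ≤ σ_max²`. For a
fixed partition of `{1,…,n}` into `K` classes (given by labels `c : Fin n → Fin K`),
with `Ξ^{(k,l)}` the submatrix with rows in class `k` and columns in class `l`, there
are absolute constants `C₁, C₂, C₃` such that for every `t > 0`, with probability at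
least `1 − e^{−t}`, `Σ_{k,l} ‖Ξ^{(k,l)}‖_op² ≤ σ_max² (C₁ n K + C₂ K² log n + C₃ t)`. -/
theorem stmt_2 :
    ∃ C₁ C₂ C₃ : ℝ,
      ∀ (n K : ℕ) (Ω : Type) (_ : MeasurableSpace Ω) (Pr : Measure Ω),
        IsProbabilityMeasure Pr →
      ∀ (Ξ : Ω → Matrix (Fin n) (Fin n) ℝ) (var : Fin n → Fin n → NNReal) (σmax : ℝ),
        (∀ ω, (Ξ ω).IsSymm) →
        (∀ ω u, Ξ ω u u = 0) →
        (∀ u w : Fin n, u < w →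
          Measure.map (fun ω => Ξ ω u w) Pr = gaussianReal 0 (var u w)) →
        iIndepFun
          (fun (p : {p : Fin n × Fin n // p.1 < p.2}) => fun ω => Ξ ω p.1.1 p.1.2) Pr →
        (∀ u w : Fin n, (var u w : ℝ) ≤ σmax ^ 2) →
        ∀ c : Fin n → Fin K,
        ∀ t : ℝ, 0 < t →
          Pr {ω | ∑ k : Fin K, ∑ l : Fin K,
                (opNormM ((Ξ ω).submatrix
                  (fun u : {u : Fin n // c u = k} => (u : Fin n))
                  (fun u : {u : Fin n // c u = l} => (u : Fin n)))) ^ 2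
              ≤ σmax ^ 2 * (C₁ * n * K + C₂ * (K : ℝ) ^ 2 * Real.log n + C₃ * t)}
            ≥ 1 - ENNReal.ofReal (Real.exp (-t)) := by
  refine ⟨256, 256, 256, fun n K Ω _ Pr _ Ξ var σmax hsym hdiag hmap hind hvar c t ht ↦ ?_⟩
  refine one_sub_le_measure_of_measure_compl_le ?_
  -- `K² log n` absorbs the `K²` part of the union-bound exponent only for `n ≥ 2`;
  -- for `n ≤ 1` every block vanishes.
  rcases le_or_gt n 1 with hn | hn
  · have : Subsingleton (Fin n) := Fin.subsingleton_iff_le_one.2 hn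
    refine le_of_eq_of_le (measure_mono_null (fun ω hω ↦ hω ?_) measure_empty) zero_le
    rw [Set.mem_ofPred_eq, sum_opNormM_submatrix_sq_eq_zero c (hdiag ω)]
    have := Real.log_natCast_nonneg n
    positivity
  · refine (measure_mono fun ω hω ↦ ?_).trans (measure_lt_sum_opNormM_sq_le
      (σ2 := ⟨σmax ^ 2, sq_nonneg σmax⟩) hsym hdiag hmap hind (fun u w ↦ hvar u w) c ht.le)
    simp only [Set.mem_compl_iff, Set.mem_ofPred_eq, not_le, Fintype.card_fin] at hω ⊢
    refine lt_of_le_of_lt ?_ hω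
    change 256 / 9 * σmax ^ 2 * _ ≤ _
    have hσt : 0 ≤ σmax ^ 2 * t := by positivity
    have hσnK : 0 ≤ σmax ^ 2 * (n * K) := by positivity
    linarith [mul_le_mul_of_nonneg_left (log_netCount_le K hn) (sq_nonneg σmax)]
end

section
/- Let F₁ and F₂ be cumulative distribution functions of real random variables, at least one of which is continuous (atomless), and let F_{1,2} = F₁ * F₂ denote the cumulative distribution function of the sum of two independent random variables with respective CDFs F₁ and F₂. Define H(x,y) = F_{1,2}(F₁^{-1}(x) + F₂^{-1}(y)) for x, y ∈ (0,1), where F^{-1} denotes the generalized inverse (quantile function). Then H is nondecreasing in each argument, and for independent random variables Ψ_u, Ψ_v each uniformly distributed on (0,1), H(Ψ_u, Ψ_v) is uniformly distributed on (0,1); that is, H is an H-function with positive association. -/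
open MeasureTheory ProbabilityTheory

/-- The uniform distribution on the interval `(0,1)`. -/
noncomputable def unifOI : Measure ℝ := volume.restrict (Set.Ioo (0:ℝ) 1)

/-- The cumulative distribution function of a measure on `ℝ`. -/
noncomputable def cdfOf (μ : Measure ℝ) (x : ℝ) : ℝ := (μ (Set.Iic x)).toReal

/-- The quantile function (generalized inverse CDF) of a measure on `ℝ`:
`F⁻¹(p) = inf {x : p ≤ F(x)}`. -/
noncomputable def quantile (μ : Measure ℝ) (p : ℝ) : ℝ := sInf {x : ℝ | p ≤ cdfOf μ x}

/-! If `Ψ` is uniform on `(0,1)` then `F⁻¹(Ψ)` has CDF `F`, so `F₁⁻¹(Ψu) + F₂⁻¹(Ψv)` is a sum of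
independent variables with laws `μ₁` and `μ₂` and therefore has law `μ₁ ∗ μ₂`. A convolution with
an atomless factor is atomless, so `F₁,₂` is continuous and the probability integral transform
makes `F₁,₂(F₁⁻¹(Ψu) + F₂⁻¹(Ψv))` uniform. Monotonicity in each argument is inherited from the
CDF and the quantile functions. -/

open Set Filter Topology

instance : IsProbabilityMeasure unifOI := ⟨by simp [unifOI]⟩

lemma unifOI_eq_restrict_Ioc : unifOI = volume.restrict (Ioc 0 1) :=
  Measure.restrict_congr_set Ioo_ae_eq_Ioc

lemma unifOI_Iic {c : ℝ} (hc : c ∈ Icc 0 1) : unifOI (Iic c) = ENNReal.ofReal c := by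
  rw [unifOI_eq_restrict_Ioc, Measure.restrict_apply measurableSet_Iic, inter_comm,
    Ioc_inter_Iic, inf_eq_right.2 hc.2, Real.volume_Ioc, sub_zero]

section Quantile

variable (μ : Measure ℝ) {p : ℝ}

lemma nonempty_setOf_le_cdf (hp : p < 1) : {x | p ≤ cdf μ x}.Nonempty :=
  ((tendsto_cdf_atTop μ).eventually (eventually_ge_nhds hp)).exists

lemma bddBelow_setOf_le_cdf (hp : 0 < p) : BddBelow {x | p ≤ cdf μ x} := by
  obtain ⟨x₀, hx₀⟩ := ((tendsto_cdf_atBot μ).eventually (eventually_lt_nhds hp)).exists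
  exact ⟨x₀, fun x hx => le_of_not_gt fun hx₀x => (hx.trans (monotone_cdf μ hx₀x.le)).not_gt hx₀⟩

variable [IsProbabilityMeasure μ]

lemma cdfOf_eq_cdf : cdfOf μ = cdf μ := funext fun x => (cdf_eq_real μ x).symm

lemma quantile_eq_sInf (p : ℝ) : quantile μ p = sInf {x | p ≤ cdf μ x} := by
  rw [quantile, cdfOf_eq_cdf]

/-- The Galois connection between the quantile function and the CDF; the forward direction
uses right-continuity of the CDF at the infimum. -/
lemma quantile_le_iff (hp : p ∈ Ioo 0 1) {x : ℝ} : quantile μ p ≤ x ↔ p ≤ cdf μ x := by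
  rw [quantile_eq_sInf]
  have hbdd := bddBelow_setOf_le_cdf μ hp.1
  refine ⟨fun h => ?_, fun h => csInf_le hbdd h⟩
  set c := sInf {x | p ≤ cdf μ x}
  have hright : ∀ y, c < y → p ≤ cdf μ y := fun y hy => by
    obtain ⟨s, hs, hsy⟩ := (csInf_lt_iff hbdd (nonempty_setOf_le_cdf μ hp.2)).1 hy
    exact hs.trans (monotone_cdf μ hsy.le)
  have hc : p ≤ cdf μ c :=
    ge_of_tendsto (((cdf μ).right_continuous c).mono_left (nhdsWithin_mono _ Ioi_subset_Ici_self))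
      (eventually_nhdsWithin_of_forall hright)
  exact hc.trans (monotone_cdf μ h)

lemma quantile_monotoneOn : MonotoneOn (quantile μ) (Ioo 0 1) := fun p hp q hq hpq => by
  simp only [quantile_eq_sInf]
  exact csInf_le_csInf (bddBelow_setOf_le_cdf μ hp.1) (nonempty_setOf_le_cdf μ hq.2)
    fun x hx => hpq.trans hx

lemma aemeasurable_quantile : AEMeasurable (quantile μ) unifOI :=
  aemeasurable_restrict_of_monotoneOn measurableSet_Ioo (quantile_monotoneOn μ)

lemma map_quantile_unifOI : unifOI.map (quantile μ) = μ := by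
  refine Measure.ext_of_Iic _ _ fun x => ?_
  have hpre : quantile μ ⁻¹' Iic x ∩ Ioo 0 1 = Iic (cdf μ x) ∩ Ioo 0 1 := by
    ext p
    simp only [mem_inter_iff, mem_preimage, mem_Iic]
    exact and_congr_left fun hp => quantile_le_iff μ hp
  rw [Measure.map_apply_of_aemeasurable (aemeasurable_quantile μ) measurableSet_Iic, unifOI,
    Measure.restrict_apply' measurableSet_Ioo, hpre, ← Measure.restrict_apply' measurableSet_Ioo,
    ← unifOI, unifOI_Iic ⟨cdf_nonneg μ x, cdf_le_one μ x⟩, ofReal_cdf]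

lemma map_quantile_comp_of_map_eq_unifOI {Ω : Type*} [MeasurableSpace Ω] {P : Measure Ω}
    {Ψ : Ω → ℝ} (hΨ : AEMeasurable Ψ P) (hunif : P.map Ψ = unifOI) :
    P.map (quantile μ ∘ Ψ) = μ := by
  rw [← AEMeasurable.map_map_of_aemeasurable (hunif ▸ aemeasurable_quantile μ) hΨ, hunif,
    map_quantile_unifOI]

/-- For an atomless law the CDF has no jumps, so it is a left inverse of the quantile function
on `(0,1)`. -/
lemma cdf_quantile [NullSingletonClass μ] (hp : p ∈ Ioo 0 1) : cdf μ (quantile μ p) = p := by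
  set c := quantile μ p
  have hno_jump : Function.leftLim (cdf μ) c = cdf μ c := by
    have h := StieltjesFunction.measure_singleton (cdf μ) c
    rw [measure_cdf, measure_singleton, eq_comm, ENNReal.ofReal_eq_zero, sub_nonpos] at h
    exact le_antisymm ((monotone_cdf μ).leftLim_le le_rfl) h
  refine le_antisymm ?_ ((quantile_le_iff μ hp).1 le_rfl)
  rw [← hno_jump]
  refine le_of_tendsto ((monotone_cdf μ).tendsto_leftLim c) ?_
  exact eventually_nhdsWithin_of_forall fun x hx =>
    le_of_not_ge fun h => hx.not_ge ((quantile_le_iff μ hp).2 h)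

theorem map_cdf_eq_unifOI [NullSingletonClass μ] : μ.map (cdf μ) = unifOI :=
  calc μ.map (cdf μ) = (unifOI.map (quantile μ)).map (cdf μ) := by rw [map_quantile_unifOI]
    _ = unifOI.map (cdf μ ∘ quantile μ) :=
      (monotone_cdf μ).measurable.aemeasurable.map_map_of_aemeasurable (aemeasurable_quantile μ)
    _ = unifOI.map id :=
      Measure.map_congr <| ae_restrict_of_forall_mem measurableSet_Ioo fun _ hp => cdf_quantile μ hp
    _ = unifOI := Measure.map_id

end Quantile

lemma nullSingletonClass_conv_left {G : Type*} [AddGroup G] [MeasurableSpace G]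
    [MeasurableAdd₂ G] [MeasurableSingletonClass G] (μ ν : Measure G) [NullSingletonClass μ]
    [SFinite μ] [SFinite ν] : NullSingletonClass (μ.conv ν) := by
  refine ⟨fun x => ?_⟩
  have hs : MeasurableSet ((fun z : G × G => z.1 + z.2) ⁻¹' {x}) :=
    measurable_add (measurableSet_singleton x)
  have hfiber : ∀ y, (fun a => (a, y)) ⁻¹' ((fun z : G × G => z.1 + z.2) ⁻¹' {x}) = {x - y} :=
    fun y => by ext; simp [eq_sub_iff_add_eq]
  rw [Measure.conv, Measure.map_apply measurable_add (measurableSet_singleton x),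
    Measure.prod_apply_symm hs]
  simp only [hfiber, measure_singleton, lintegral_zero]

/-- Let `F₁, F₂` be the CDFs of probability measures `μ₁, μ₂` on `ℝ`,
at least one of which is atomless, and let `F_{1,2}` be the CDF of the convolution
`μ₁ ∗ μ₂` (the law of the sum of independent random variables with these CDFs).
Then `H(x,y) = F_{1,2}(F₁⁻¹(x) + F₂⁻¹(y))` is nondecreasing in each argument on `(0,1)`,
and for independent random variables `Ψu, Ψv` each uniform on `(0,1)`,
`H (Ψu, Ψv)` is uniformly distributed on `(0,1)`: `H` is an H-function with
positive association. -/
theorem stmt_5 (μ₁ μ₂ : Measure ℝ) [IsProbabilityMeasure μ₁] [IsProbabilityMeasure μ₂]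
    (hcont : (∀ x : ℝ, μ₁ {x} = 0) ∨ (∀ x : ℝ, μ₂ {x} = 0)) :
    (∀ y ∈ Set.Ioo (0:ℝ) 1, MonotoneOn
        (fun x => cdfOf (μ₁.conv μ₂) (quantile μ₁ x + quantile μ₂ y)) (Set.Ioo (0:ℝ) 1)) ∧
    (∀ x ∈ Set.Ioo (0:ℝ) 1, MonotoneOn
        (fun y => cdfOf (μ₁.conv μ₂) (quantile μ₁ x + quantile μ₂ y)) (Set.Ioo (0:ℝ) 1)) ∧
    (∀ (Ω : Type) (_ : MeasurableSpace Ω) (Pr : Measure Ω), IsProbabilityMeasure Pr →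
      ∀ Ψu Ψv : Ω → ℝ, Measurable Ψu → Measurable Ψv → IndepFun Ψu Ψv Pr →
        Measure.map Ψu Pr = unifOI → Measure.map Ψv Pr = unifOI →
        Measure.map
          (fun ω => cdfOf (μ₁.conv μ₂) (quantile μ₁ (Ψu ω) + quantile μ₂ (Ψv ω))) Pr
          = unifOI) := by
  rw [cdfOf_eq_cdf]
  refine ⟨fun y _ => ?_, fun x _ => ?_, ?_⟩
  · exact (monotone_cdf _).comp_monotoneOn ((quantile_monotoneOn μ₁).add_const _)
  · exact (monotone_cdf _).comp_monotoneOn ((quantile_monotoneOn μ₂).const_add _)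
  intro Ω _ Pr _ Ψu Ψv hu hv hind hunif_u hunif_v
  have : NullSingletonClass (μ₁.conv μ₂) := by
    rcases hcont with h | h
    · have := NullSingletonClass.mk h
      exact nullSingletonClass_conv_left μ₁ μ₂
    · have := NullSingletonClass.mk h
      rw [Measure.conv_comm]
      exact nullSingletonClass_conv_left μ₂ μ₁
  have hq₁ : AEMeasurable (quantile μ₁) (Pr.map Ψu) := hunif_u ▸ aemeasurable_quantile μ₁
  have hq₂ : AEMeasurable (quantile μ₂) (Pr.map Ψv) := hunif_v ▸ aemeasurable_quantile μ₂
  have hsum : AEMeasurable (quantile μ₁ ∘ Ψu + quantile μ₂ ∘ Ψv) Pr :=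
    (hq₁.comp_aemeasurable hu.aemeasurable).add (hq₂.comp_aemeasurable hv.aemeasurable)
  have hlaw : Pr.map (quantile μ₁ ∘ Ψu + quantile μ₂ ∘ Ψv) = μ₁.conv μ₂ := by
    rw [(hind.comp₀ hu.aemeasurable hv.aemeasurable hq₁ hq₂).map_add_eq_map_conv_map₀
      (hq₁.comp_aemeasurable hu.aemeasurable) (hq₂.comp_aemeasurable hv.aemeasurable),
      map_quantile_comp_of_map_eq_unifOI μ₁ hu.aemeasurable hunif_u,
      map_quantile_comp_of_map_eq_unifOI μ₂ hv.aemeasurable hunif_v]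
  calc Pr.map (cdf (μ₁.conv μ₂) ∘ (quantile μ₁ ∘ Ψu + quantile μ₂ ∘ Ψv))
      = (Pr.map (quantile μ₁ ∘ Ψu + quantile μ₂ ∘ Ψv)).map (cdf (μ₁.conv μ₂)) :=
        ((monotone_cdf _).measurable.aemeasurable.map_map_of_aemeasurable hsum).symm
    _ = unifOI := by rw [hlaw, map_cdf_eq_unifOI]
end

section
/- Let α ∈ (0,1), let U and V be independent random variables uniformly distributed on (0,1), and let B be a Bernoulli random variable independent of (U, V) with P(B = 1) = 1 − α. Define T = U^{α} if B = 0 and T = U^{α} · V if B = 1. Then T is uniformly distributed on (0,1). Equivalently, if E₁ and E₂ are independent exponential random variables with rate 1 and B is an independent Bernoulli(1−α) random variable, then α E₁ + B E₂ is exponentially distributed with rate 1. -/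
/-!
Conditioning on `B`, `P(T ≤ t) = α P(U^α ≤ t) + (1 - α) P(U^α V ≤ t)`. For `t ∈ (0,1)`
put `s = t^(1/α)`: the first probability is `s`, and Fubini gives the second as
`∫₀¹ min(t u^(-α), 1) du = s + (t - s)/(1 - α)`, so the mixture is `t`. A probability
measure with distribution function `t` on `(0,1)` is the uniform one.
-/

open MeasureTheory ProbabilityTheory

open Set Filter Topology

lemma unifOI_apply (s : Set ℝ) : unifOI s = volume (s ∩ Ioo 0 1) :=
  Measure.restrict_apply' measurableSet_Ioo

instance inst_s12 : IsProbabilityMeasure unifOI :=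
  ⟨by rw [unifOI_apply, univ_inter, Real.volume_Ioo, sub_zero, ENNReal.ofReal_one]⟩

lemma unifOI_Iic_s12 (t : ℝ) : unifOI (Iic t) = ENNReal.ofReal (min t 1) := by
  rw [unifOI_apply]
  rcases le_or_gt 1 t with h | h
  · rw [inter_eq_self_of_subset_right fun x hx => hx.2.le.trans h, Real.volume_Ioo,
      min_eq_right h, sub_zero]
  · have : Iic t ∩ Ioo 0 1 = Ioc 0 t := by
      ext x
      simp only [mem_inter_iff, mem_Iic, mem_Ioo, mem_Ioc]
      exact ⟨fun ⟨h1, h2, _⟩ => ⟨h2, h1⟩, fun ⟨h1, h2⟩ => ⟨h2, h1, h2.trans_lt h⟩⟩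
    rw [this, Real.volume_Ioc, min_eq_left h.le, sub_zero]

lemma unifOI_rpow_le {α t : ℝ} (hα : 0 < α) (ht : 0 ≤ t) :
    unifOI {x | x ^ α ≤ t} = ENNReal.ofReal (min (t ^ α⁻¹) 1) := by
  have : {x : ℝ | x ^ α ≤ t} ∩ Ioo 0 1 = Iic (t ^ α⁻¹) ∩ Ioo 0 1 := by
    ext x
    simp only [mem_inter_iff, mem_ofPred_eq, mem_Iic, and_congr_left_iff]
    exact fun hx => (Real.le_rpow_inv_iff_of_pos hx.1.le ht hα).symm
  rw [unifOI_apply, this, ← unifOI_apply, unifOI_Iic_s12]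

lemma eq_unifOI_of_Iic {μ : Measure ℝ} [IsProbabilityMeasure μ]
    (h : ∀ t ∈ Ioo (0:ℝ) 1, μ (Iic t) = ENNReal.ofReal t) : μ = unifOI := by
  refine Measure.ext_of_Iic _ _ fun t => ?_
  rw [unifOI_Iic_s12]
  rcases le_or_gt t 0 with ht0 | ht0
  · rw [min_eq_left (ht0.trans zero_le_one), ENNReal.ofReal_of_nonpos ht0,
      ← nonpos_iff_eq_zero]
    refine ge_of_tendsto (f := ENNReal.ofReal) (x := 𝓝[>] (0:ℝ)) ?_ ?_
    · exact (ENNReal.continuous_ofReal.tendsto' 0 0 ENNReal.ofReal_zero).mono_left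
        nhdsWithin_le_nhds
    · filter_upwards [Ioo_mem_nhdsGT zero_lt_one] with s hs
      exact h s hs ▸ measure_mono (Iic_subset_Iic.2 (ht0.trans hs.1.le))
  rcases le_or_gt 1 t with ht1 | ht1
  · rw [min_eq_right ht1, ENNReal.ofReal_one]
    refine le_antisymm prob_le_one
      (le_of_tendsto (f := ENNReal.ofReal) (x := 𝓝[<] (1:ℝ)) ?_ ?_)
    · exact (ENNReal.continuous_ofReal.tendsto' 1 1 ENNReal.ofReal_one).mono_left
        nhdsWithin_le_nhds
    · filter_upwards [Ioo_mem_nhdsLT zero_lt_one] with s hs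
      exact h s hs ▸ measure_mono (Iic_subset_Iic.2 (hs.2.le.trans ht1))
  · rw [min_eq_left ht1.le, h t ⟨ht0, ht1⟩]

lemma setIntegral_Ioo_const_mul_rpow_neg {α a t : ℝ} (hα : α < 1) (ha : a ≤ 1) :
    ∫ x in Ioo a 1, t * x ^ (-α) = t * (1 - a ^ (1 - α)) / (1 - α) := by
  rw [← integral_Ioc_eq_integral_Ioo, ← intervalIntegral.integral_of_le ha,
    intervalIntegral.integral_const_mul, integral_rpow (Or.inl (by linarith)), Real.one_rpow,
    neg_add_eq_sub, mul_div_assoc]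

lemma setLIntegral_Ioo_min_div_rpow {α t : ℝ} (hα0 : 0 < α) (hα1 : α < 1) (ht0 : 0 < t)
    (ht1 : t < 1) :
    ∫⁻ x in Ioo 0 1, ENNReal.ofReal (min (t / x ^ α) 1) =
      ENNReal.ofReal ((t - α * t ^ α⁻¹) / (1 - α)) := by
  set s := t ^ α⁻¹
  have hs0 : 0 < s := Real.rpow_pos_of_pos ht0 _
  have hs1 : s < 1 := Real.rpow_lt_one ht0.le ht1 (inv_pos.2 hα0)
  have hsα : s ^ α = t := Real.rpow_inv_rpow ht0.le hα0.ne'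
  have hst : s ≤ t := Real.rpow_le_self_of_le_one ht0.le ht1.le ((one_le_inv₀ hα0).2 hα1.le)
  have h_lower : EqOn (fun x => ENNReal.ofReal (min (t / x ^ α) 1)) (fun _ => 1) (Ioc 0 s) := by
    intro x hx
    have hxα : x ^ α ≤ t := hsα ▸ Real.rpow_le_rpow hx.1.le hx.2 hα0.le
    simp [min_eq_right ((one_le_div (Real.rpow_pos_of_pos hx.1 α)).2 hxα)]
  have h_upper : EqOn (fun x => ENNReal.ofReal (min (t / x ^ α) 1))
      (fun x => ENNReal.ofReal (t * x ^ (-α))) (Ioo s 1) := by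
    intro x hx
    have hx0 : 0 < x := hs0.trans hx.1
    have htx : t ≤ x ^ α := hsα ▸ Real.rpow_le_rpow hs0.le hx.1.le hα0.le
    dsimp only
    rw [min_eq_left ((div_le_one (Real.rpow_pos_of_pos hx0 α)).2 htx), Real.rpow_neg hx0.le,
      div_eq_mul_inv]
  have h_int : IntegrableOn (fun x => t * x ^ (-α)) (Ioo s 1) :=
    (intervalIntegrable_iff_integrableOn_Ioo_of_le hs1.le).1
      ((intervalIntegral.intervalIntegrable_rpow' (by linarith)).const_mul t)
  have h_nonneg : 0 ≤ᵐ[volume.restrict (Ioo s 1)] fun x => t * x ^ (-α) :=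
    ae_restrict_of_forall_mem measurableSet_Ioo fun x hx =>
      mul_nonneg ht0.le (Real.rpow_nonneg (hs0.trans hx.1).le _)
  have hts : t * s ^ (1 - α) = s := by
    rw [← hsα, ← Real.rpow_add hs0, add_sub_cancel, Real.rpow_one]
  rw [← Ioc_union_Ioo_eq_Ioo hs0.le hs1,
    lintegral_union measurableSet_Ioo (Ioc_disjoint_Ioi_same.mono_right Ioo_subset_Ioi_self),
    setLIntegral_congr_fun measurableSet_Ioc h_lower,
    setLIntegral_congr_fun measurableSet_Ioo h_upper, setLIntegral_one, Real.volume_Ioc, sub_zero,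
    ← ofReal_integral_eq_lintegral_ofReal h_int h_nonneg,
    setIntegral_Ioo_const_mul_rpow_neg hα1 hs1.le, mul_sub, mul_one, hts,
    ← ENNReal.ofReal_add hs0.le (div_nonneg (by linarith) (by linarith))]
  have h1α : 1 - α ≠ 0 := sub_ne_zero.2 hα1.ne'
  congr 1
  field_simp
  ring

lemma unifOI_prod_rpow_mul_le {α t : ℝ} (hα0 : 0 < α) (hα1 : α < 1) (ht0 : 0 < t)
    (ht1 : t < 1) :
    (unifOI.prod unifOI) {p : ℝ × ℝ | p.1 ^ α * p.2 ≤ t} =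
      ENNReal.ofReal ((t - α * t ^ α⁻¹) / (1 - α)) := by
  have h_fiber : EqOn (fun x => unifOI (Prod.mk x ⁻¹' {p : ℝ × ℝ | p.1 ^ α * p.2 ≤ t}))
      (fun x => ENNReal.ofReal (min (t / x ^ α) 1)) (Ioo 0 1) := by
    intro x hx
    have : Prod.mk x ⁻¹' {p : ℝ × ℝ | p.1 ^ α * p.2 ≤ t} = Iic (t / x ^ α) := by
      ext y
      exact (le_div_iff₀' (Real.rpow_pos_of_pos hx.1 α)).symm
    simp only [this, unifOI_Iic_s12]
  rw [Measure.prod_apply (measurableSet_le (by fun_prop) measurable_const)]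
  exact (setLIntegral_congr_fun measurableSet_Ioo h_fiber).trans
    (setLIntegral_Ioo_min_div_rpow hα0 hα1 ht0 ht1)

lemma map_ite_of_indepFun {Ω β γ : Type*} [MeasurableSpace Ω] [MeasurableSpace β]
    [MeasurableSpace γ] {P : Measure Ω} {B : Ω → Bool} {X : Ω → β} (hB : Measurable B)
    (hX : Measurable X) (hBX : IndepFun B X P) {f g : β → γ} (hf : Measurable f)
    (hg : Measurable g) :
    P.map (fun ω => if B ω then f (X ω) else g (X ω)) =
      P {ω | B ω = true} • (P.map X).map f + P {ω | B ω = false} • (P.map X).map g := by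
  have hT : Measurable (fun ω => if B ω then f (X ω) else g (X ω)) :=
    Measurable.ite (measurableSet_eq_fun hB measurable_const) (hf.comp hX) (hg.comp hX)
  ext S hS
  have h_split : (fun ω => if B ω then f (X ω) else g (X ω)) ⁻¹' S =
      B ⁻¹' {true} ∩ X ⁻¹' (f ⁻¹' S) ∪ B ⁻¹' {false} ∩ X ⁻¹' (g ⁻¹' S) := by
    ext ω
    cases h : B ω <;> simp [h]
  have h_disj : Disjoint (B ⁻¹' {true} ∩ X ⁻¹' (f ⁻¹' S)) (B ⁻¹' {false} ∩ X ⁻¹' (g ⁻¹' S)) :=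
    ((disjoint_singleton.2 (by decide)).preimage B).mono inter_subset_left
      inter_subset_left
  rw [Measure.map_apply hT hS, h_split,
    measure_union h_disj ((hB (measurableSet_singleton _)).inter (hX (hg hS))),
    hBX.measure_inter_preimage_eq_mul _ _ (measurableSet_singleton _) (hf hS),
    hBX.measure_inter_preimage_eq_mul _ _ (measurableSet_singleton _) (hg hS),
    Measure.add_apply, Measure.smul_apply, Measure.smul_apply, Measure.map_apply hf hS,
    Measure.map_apply hg hS, Measure.map_apply hX (hf hS), Measure.map_apply hX (hg hS)]
  rfl

/-- The law of `T` obtained by conditioning on `B`. -/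
noncomputable def failureLaw (α : ℝ) : Measure ℝ :=
  ENNReal.ofReal (1 - α) • (unifOI.prod unifOI).map (fun p => p.1 ^ α * p.2) +
    ENNReal.ofReal α • (unifOI.prod unifOI).map (fun p => p.1 ^ α)

lemma failureLaw_Iic {α t : ℝ} (hα0 : 0 < α) (hα1 : α < 1) (ht : t ∈ Ioo 0 1) :
    failureLaw α (Iic t) = ENNReal.ofReal t := by
  obtain ⟨ht0, ht1⟩ := ht
  have h_fst :
      (unifOI.prod unifOI) {p : ℝ × ℝ | p.1 ^ α ≤ t} = ENNReal.ofReal (t ^ α⁻¹) := by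
    rw [show {p : ℝ × ℝ | p.1 ^ α ≤ t} = {x | x ^ α ≤ t} ×ˢ univ by ext; simp,
      Measure.prod_prod, measure_univ, mul_one, unifOI_rpow_le hα0 ht0.le,
      min_eq_left (Real.rpow_le_one ht0.le ht1.le (inv_nonneg.2 hα0.le))]
  have hst : t ^ α⁻¹ ≤ t :=
    Real.rpow_le_self_of_le_one ht0.le ht1.le ((one_le_inv₀ hα0).2 hα1.le)
  have h1α : 1 - α ≠ 0 := sub_ne_zero.2 hα1.ne'
  rw [failureLaw, Measure.add_apply, Measure.smul_apply, Measure.smul_apply,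
    Measure.map_apply (by fun_prop) measurableSet_Iic,
    Measure.map_apply (by fun_prop) measurableSet_Iic]
  simp only [preimage, mem_Iic]
  rw [unifOI_prod_rpow_mul_le hα0 hα1 ht0 ht1, h_fst, smul_eq_mul, smul_eq_mul,
    ← ENNReal.ofReal_mul (by linarith), ← ENNReal.ofReal_mul hα0.le,
    ← ENNReal.ofReal_add ?_ (by positivity)]
  · congr 1
    field_simp
    ring
  · rw [mul_div_cancel₀ _ h1α]
    nlinarith [Real.rpow_nonneg ht0.le α⁻¹]

/-- Let `α ∈ (0,1)`, let `U, V` be independent uniforms on `(0,1)`,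
and let `B` be a Bernoulli random variable with `P(B = 1) = 1 − α`, independent of
`(U,V)`. Define `T = U^α` if `B = 0` and `T = U^α · V` if `B = 1`. Then `T` is
uniformly distributed on `(0,1)`. -/
theorem stmt_12 (α : ℝ) (hα : α ∈ Set.Ioo (0:ℝ) 1)
    {Ω : Type} [MeasurableSpace Ω] (Pr : Measure Ω) [IsProbabilityMeasure Pr]
    (U V : Ω → ℝ) (B : Ω → Bool)
    (hU : Measurable U) (hV : Measurable V) (hB : Measurable B)
    (hUV : IndepFun U V Pr)
    (hBUV : IndepFun B (fun ω => (U ω, V ω)) Pr)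
    (hlU : Measure.map U Pr = unifOI) (hlV : Measure.map V Pr = unifOI)
    (hlB : Pr {ω | B ω = true} = ENNReal.ofReal (1 - α)) :
    Measure.map (fun ω => if B ω then U ω ^ α * V ω else U ω ^ α) Pr = unifOI := by
  obtain ⟨hα0, hα1⟩ := hα
  have hlUV : Pr.map (fun ω => (U ω, V ω)) = unifOI.prod unifOI := by
    rw [(indepFun_iff_map_prod_eq_prod_map_map hU.aemeasurable hV.aemeasurable).1 hUV, hlU, hlV]
  have hlB' : Pr {ω | B ω = false} = ENNReal.ofReal α := by
    simp_rw [Bool.eq_false_iff, ← compl_ofPred,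
      prob_compl_eq_one_sub (measurableSet_eq_fun hB measurable_const), hlB,
      ← ENNReal.ofReal_one, ← ENNReal.ofReal_sub _ (sub_nonneg.2 hα1.le), sub_sub_cancel]
  have hT : Measurable fun ω => if B ω then U ω ^ α * V ω else U ω ^ α :=
    Measurable.ite (measurableSet_eq_fun hB measurable_const) (by fun_prop) (by fun_prop)
  have := Measure.isProbabilityMeasure_map (μ := Pr) hT.aemeasurable
  have h_law : Pr.map (fun ω => if B ω then U ω ^ α * V ω else U ω ^ α) = failureLaw α := by
    rw [map_ite_of_indepFun hB (hU.prodMk hV) hBUV (f := fun p : ℝ × ℝ => p.1 ^ α * p.2)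
      (g := fun p => p.1 ^ α) (by fun_prop) (by fun_prop), hlUV, hlB, hlB']
    rfl
  exact eq_unifOI_of_Iic fun t ht => h_law ▸ failureLaw_Iic hα0 hα1 ht
end
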